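/- arXiv:2307.07209 — 3 statements merged into one kernel-verified Lean document; each statement's English description precedes it below -/
import Mathlib

section
/- For every si-logic L, the fmp span of L is exactly the interval [L⁻, L⁺] in the lattice of si-logics: fmp(L) = { L' an si-logic : L⁻ ⊆ L' ⊆ L⁺ }. -/
/-- Intuitionistic propositional formulas over variables `p₀, p₁, …`. -/
inductive IForm : Type
  | var : ℕ → IForm
  | bot : IForm
  | and : IForm → IForm → IForm
  | or : IForm → IForm → IForm
  | imp : IForm → IForm → IForm

namespace IForm

/-- Uniform substitution. -/
def subst (σ : ℕ → IForm) : IForm → IForm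
  | var n => σ n
  | bot => bot
  | and φ ψ => and (subst σ φ) (subst σ ψ)
  | or φ ψ => or (subst σ φ) (subst σ ψ)
  | imp φ ψ => imp (subst σ φ) (subst σ ψ)

/-- Biconditional `φ ↔ ψ`. -/
def biimp (φ ψ : IForm) : IForm := and (imp φ ψ) (imp ψ φ)

end IForm

/-- The theorems of the intuitionistic propositional calculus `IPC`, given by a
standard Hilbert-style axiomatization (all axioms are schemes, so `IPC` is
closed under uniform substitution) together with modus ponens. -/
inductive IPC : IForm → Prop
  | ax1 (φ ψ : IForm) : IPC (φ.imp (ψ.imp φ))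
  | ax2 (φ ψ χ : IForm) : IPC ((φ.imp (ψ.imp χ)).imp ((φ.imp ψ).imp (φ.imp χ)))
  | andE1 (φ ψ : IForm) : IPC ((φ.and ψ).imp φ)
  | andE2 (φ ψ : IForm) : IPC ((φ.and ψ).imp ψ)
  | andI (φ ψ : IForm) : IPC (φ.imp (ψ.imp (φ.and ψ)))
  | orI1 (φ ψ : IForm) : IPC (φ.imp (φ.or ψ))
  | orI2 (φ ψ : IForm) : IPC (ψ.imp (φ.or ψ))
  | orE (φ ψ χ : IForm) : IPC ((φ.imp χ).imp ((ψ.imp χ).imp ((φ.or ψ).imp χ)))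
  | exfalso (φ : IForm) : IPC (IForm.bot.imp φ)
  | mp (φ ψ : IForm) : IPC (φ.imp ψ) → IPC φ → IPC ψ

/-- A superintuitionistic logic: a set of formulas containing `IPC` and closed
under modus ponens and uniform substitution. -/
def SuperIntuitionistic (L : Set IForm) : Prop :=
  (∀ φ, IPC φ → φ ∈ L) ∧
  (∀ φ ψ, φ.imp ψ ∈ L → φ ∈ L → ψ ∈ L) ∧
  (∀ φ (σ : ℕ → IForm), φ ∈ L → φ.subst σ ∈ L)
/-- Kripke forcing on a poset, relative to a valuation by upsets. -/
def Forces {X : Type} [Preorder X] (v : ℕ → Set X) : X → IForm → Prop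
  | x, .var n => x ∈ v n
  | _, .bot => False
  | x, .and φ ψ => Forces v x φ ∧ Forces v x ψ
  | x, .or φ ψ => Forces v x φ ∨ Forces v x ψ
  | x, .imp φ ψ => ∀ y, x ≤ y → Forces v y φ → Forces v y ψ

/-- A formula is valid in a poset if it is forced at every point under every
valuation by upsets. -/
def ValidIn (X : Type) [Preorder X] (φ : IForm) : Prop :=
  ∀ v : ℕ → Set X, (∀ n, IsUpperSet (v n)) → ∀ x : X, Forces v x φ

/-- A poset validates a logic if every formula of the logic is valid in it. -/
def ValidLogic (X : Type) [Preorder X] (L : Set IForm) : Prop :=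
  ∀ φ ∈ L, ValidIn X φ

/-- `Fin(L) = Fin(L')`: the two logics are validated by the same finite posets. -/
def SameFinPosets (L L' : Set IForm) : Prop :=
  ∀ (X : Type) [Fintype X] [PartialOrder X], ValidLogic X L ↔ ValidLogic X L'

/-- The fmp span of a logic: the si-logics validated by the same finite posets. -/
def fmpSpan (L : Set IForm) : Set (Set IForm) :=
  {L' | SuperIntuitionistic L' ∧ SameFinPosets L L'}

/-- The degree of the finite model property of a logic. -/
def degFmp (L : Set IForm) : Cardinal :=
  Cardinal.mk (fmpSpan L)
/-- `IPC + Ax`: the least si-logic containing `Ax`. -/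
def IPCPlus (Ax : Set IForm) : Set IForm :=
  {φ | ∀ L : Set IForm, SuperIntuitionistic L → Ax ⊆ L → φ ∈ L}
/-- The upsets of a preorder. -/
abbrev Ups (X : Type) [Preorder X] : Type := {U : Set X // IsUpperSet U}

/-- Intersection of upsets. -/
def upsInter {X : Type} [Preorder X] (U V : Ups X) : Ups X := ⟨U.1 ∩ V.1, U.2.inter V.2⟩

/-- Union of upsets. -/
def upsUnion {X : Type} [Preorder X] (U V : Ups X) : Ups X := ⟨U.1 ∪ V.1, U.2.union V.2⟩

/-- Heyting implication of upsets: `U → V = {x : ↑x ∩ U ⊆ V}`. -/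
def upsHimp {X : Type} [Preorder X] (U V : Ups X) : Ups X :=
  ⟨{x | ∀ y, x ≤ y → y ∈ U.1 → y ∈ V.1}, by
    intro a b hab ha y hby hyU
    exact ha y (le_trans hab hby) hyU⟩

/-- The empty upset. -/
def upsEmpty {X : Type} [Preorder X] : Ups X := ⟨∅, isUpperSet_empty⟩

/-- Finite conjunction. -/
def bigConj : List IForm → IForm
  | [] => IForm.bot.imp IForm.bot
  | φ :: l => φ.and (bigConj l)

/-- The Jankov formula of a finite rooted poset `X` with root `r`: choosing a
distinct variable `p_U` for each upset `U` of `X`, it is `δ → p_s`, where `δ`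
is the conjunction of `p_{U∩V} ↔ p_U ∧ p_V`, `p_{U∪V} ↔ p_U ∨ p_V`,
`p_{U→V} ↔ (p_U → p_V)` over all upsets `U, V`, together with `p_∅ ↔ ⊥`, and
`s = X ∖ {r}` is the second largest element of `Up(X)`. -/
noncomputable def jankov (X : Type) [Fintype X] [PartialOrder X] (r : X)
    (hr : ∀ x, r ≤ x) : IForm :=
  letI : Fintype (Ups X) := Fintype.ofFinite _
  let e : Ups X ≃ Fin (Fintype.card (Ups X)) := Fintype.equivFin (Ups X)
  let p : Ups X → IForm := fun U => IForm.var (e U).val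
  let all : List (Ups X) := (List.finRange (Fintype.card (Ups X))).map e.symm
  let triple : Ups X → Ups X → IForm := fun U V =>
    ((p (upsInter U V)).biimp ((p U).and (p V))).and
      (((p (upsUnion U V)).biimp ((p U).or (p V))).and
        ((p (upsHimp U V)).biimp ((p U).imp (p V))))
  let δ : IForm :=
    (bigConj (all.map fun U => bigConj (all.map fun V => triple U V))).and
      ((p upsEmpty).biimp IForm.bot)
  let s : Ups X := ⟨Set.univ \ {r}, by
    intro a b hab ha
    simp only [Set.mem_diff, Set.mem_univ, Set.mem_singleton_iff, true_and] at ha ⊢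
    intro hb
    exact ha (le_antisymm (hb ▸ hab) (hr a))⟩
  δ.imp (p s)

/-- A formula is a Jankov formula if it is the Jankov formula of some finite
rooted poset. -/
def IsJankovFormula (φ : IForm) : Prop :=
  ∃ (X : Type) (i1 : Fintype X) (i2 : PartialOrder X) (r : X)
    (hr : ∀ x : X, i2.le r x), φ = @jankov X i1 i2 r hr
/-- An si-logic is axiomatizable by Jankov formulas if it is the least si-logic
containing some set of Jankov formulas of finite rooted posets. -/
def JankovAxiomatizable (L : Set IForm) : Prop :=
  ∃ Ax : Set IForm, (∀ φ ∈ Ax, IsJankovFormula φ) ∧ L = IPCPlus Ax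
/-- `L⁺ = Log(Fin(L))`: the logic of the finite posets validating `L`. -/
def LPlus (L : Set IForm) : Set IForm :=
  {φ | ∀ (X : Type) [Fintype X] [PartialOrder X], ValidLogic X L → ValidIn X φ}

/-- A logic has the finite model property if it is the logic of its finite
posets. -/
def HasFMP (L : Set IForm) : Prop := L = LPlus L
/-- `L⁻ = IPC + {𝒥(X) : X a finite rooted poset not validating L}`. -/
def LMinus (L : Set IForm) : Set IForm :=
  IPCPlus {φ | ∃ (X : Type) (i1 : Fintype X) (i2 : PartialOrder X) (r : X)
    (hr : ∀ x : X, i2.le r x),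
      ¬(@ValidLogic X i2.toPreorder L) ∧ φ = @jankov X i1 i2 r hr}

/-!
`L' ⊆ L⁺` says exactly that every finite poset validating `L` validates `L'`. The other half
rests on Jankov's lemma for a finite poset `X` with root `r`. First, `𝒥(X)` is refuted at `r`
under the valuation `p_U ↦ U`, which makes the diagram `δ` true everywhere. Second, an
si-logic containing a formula `φ` refuted in `X` by a valuation `v` contains `𝒥(X)`:
substituting `p_{v(q)}` for each variable `q` turns `φ` into a formula that `δ` proves
equivalent to `p_U`, `U` the truth set of `φ`; as `r ∉ U` we have `U ⊆ s`, so `δ` turns `p_U`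
into `p_s`. Hence `L⁻ ⊆ L'` says exactly that every finite poset validating `L'` validates
`L`, because a finite poset refuting a formula has a rooted generated subframe refuting it.
-/

open IForm

inductive Derivable : List IForm → IForm → Prop
  | hyp {Γ φ} : φ ∈ Γ → Derivable Γ φ
  | ipc {Γ φ} : IPC φ → Derivable Γ φ
  | mp {Γ φ ψ} : Derivable Γ (φ.imp ψ) → Derivable Γ φ → Derivable Γ ψ

theorem IPC.imp_self (φ : IForm) : IPC (φ.imp φ) :=
  IPC.mp _ _ (IPC.mp _ _ (IPC.ax2 φ (φ.imp φ) φ) (IPC.ax1 φ (φ.imp φ))) (IPC.ax1 φ φ)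

namespace Derivable

variable {Γ : List IForm} {γ φ ψ χ φ' ψ' : IForm}

theorem of_ipc_nil (h : Derivable [] φ) : IPC φ := by
  induction h with
  | hyp h => exact absurd h List.not_mem_nil
  | ipc h => exact h
  | mp _ _ ih₁ ih₂ => exact IPC.mp _ _ ih₁ ih₂

theorem weaken (h : Derivable Γ φ) : Derivable (γ :: Γ) φ := by
  induction h with
  | hyp h => exact hyp (List.mem_cons_of_mem _ h)
  | ipc h => exact ipc h
  | mp _ _ ih₁ ih₂ => exact mp ih₁ ih₂

theorem head : Derivable (γ :: Γ) γ := hyp List.mem_cons_self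

theorem imp_intro (h : Derivable (γ :: Γ) φ) : Derivable Γ (γ.imp φ) := by
  induction h with
  | hyp h =>
    rcases List.mem_cons.1 h with rfl | h
    · exact ipc (IPC.imp_self _)
    · exact mp (ipc (IPC.ax1 _ _)) (hyp h)
  | ipc h => exact mp (ipc (IPC.ax1 _ _)) (ipc h)
  | mp _ _ ih₁ ih₂ => exact mp (mp (ipc (IPC.ax2 _ _ _)) ih₁) ih₂

theorem andI (h₁ : Derivable Γ φ) (h₂ : Derivable Γ ψ) : Derivable Γ (φ.and ψ) :=
  mp (mp (ipc (IPC.andI _ _)) h₁) h₂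

theorem andE1 (h : Derivable Γ (φ.and ψ)) : Derivable Γ φ := mp (ipc (IPC.andE1 _ _)) h

theorem andE2 (h : Derivable Γ (φ.and ψ)) : Derivable Γ ψ := mp (ipc (IPC.andE2 _ _)) h

theorem orI1 (h : Derivable Γ φ) : Derivable Γ (φ.or ψ) := mp (ipc (IPC.orI1 _ _)) h

theorem imp_trans (h₁ : Derivable Γ (φ.imp ψ)) (h₂ : Derivable Γ (ψ.imp χ)) :
    Derivable Γ (φ.imp χ) :=
  imp_intro (mp h₂.weaken (mp h₁.weaken head))

theorem bigConj_elim {l : List IForm} (h : Derivable Γ (bigConj l)) (hφ : φ ∈ l) :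
    Derivable Γ φ := by
  induction l with
  | nil => exact absurd hφ List.not_mem_nil
  | cons a l ih =>
    rcases List.mem_cons.1 hφ with rfl | hφ
    · exact h.andE1
    · exact ih h.andE2 hφ

theorem biimp_refl : Derivable Γ (φ.biimp φ) :=
  andI (ipc (IPC.imp_self _)) (ipc (IPC.imp_self _))

theorem biimp_symm (h : Derivable Γ (φ.biimp ψ)) : Derivable Γ (ψ.biimp φ) :=
  andI h.andE2 h.andE1

theorem biimp_trans (h₁ : Derivable Γ (φ.biimp ψ)) (h₂ : Derivable Γ (ψ.biimp χ)) :
    Derivable Γ (φ.biimp χ) :=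
  andI (imp_trans h₁.andE1 h₂.andE1) (imp_trans h₂.andE2 h₁.andE2)

theorem biimp_mp (h : Derivable Γ (φ.biimp ψ)) (hφ : Derivable Γ φ) : Derivable Γ ψ :=
  mp h.andE1 hφ

theorem and_mono (h₁ : Derivable Γ (φ.imp φ')) (h₂ : Derivable Γ (ψ.imp ψ')) :
    Derivable Γ ((φ.and ψ).imp (φ'.and ψ')) :=
  imp_intro (andI (mp h₁.weaken head.andE1) (mp h₂.weaken head.andE2))

theorem or_mono (h₁ : Derivable Γ (φ.imp φ')) (h₂ : Derivable Γ (ψ.imp ψ')) :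
    Derivable Γ ((φ.or ψ).imp (φ'.or ψ')) :=
  mp (mp (ipc (IPC.orE _ _ _)) (imp_trans h₁ (ipc (IPC.orI1 _ _))))
    (imp_trans h₂ (ipc (IPC.orI2 _ _)))

theorem imp_mono (h₁ : Derivable Γ (φ'.imp φ)) (h₂ : Derivable Γ (ψ.imp ψ')) :
    Derivable Γ ((φ.imp ψ).imp (φ'.imp ψ')) :=
  imp_intro (imp_trans h₁.weaken (imp_trans head h₂.weaken))

theorem and_congr (h₁ : Derivable Γ (φ.biimp φ')) (h₂ : Derivable Γ (ψ.biimp ψ')) :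
    Derivable Γ ((φ.and ψ).biimp (φ'.and ψ')) :=
  andI (and_mono h₁.andE1 h₂.andE1) (and_mono h₁.andE2 h₂.andE2)

theorem or_congr (h₁ : Derivable Γ (φ.biimp φ')) (h₂ : Derivable Γ (ψ.biimp ψ')) :
    Derivable Γ ((φ.or ψ).biimp (φ'.or ψ')) :=
  andI (or_mono h₁.andE1 h₂.andE1) (or_mono h₁.andE2 h₂.andE2)

theorem imp_congr (h₁ : Derivable Γ (φ.biimp φ')) (h₂ : Derivable Γ (ψ.biimp ψ')) :
    Derivable Γ ((φ.imp ψ).biimp (φ'.imp ψ')) :=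
  andI (imp_mono h₁.andE2 h₂.andE1) (imp_mono h₁.andE1 h₂.andE2)

end Derivable

section Kripke

variable {X : Type} [Preorder X]

theorem Forces.mono {v : ℕ → Set X} (hv : ∀ n, IsUpperSet (v n)) {φ : IForm} {x y : X}
    (hxy : x ≤ y) (h : Forces v x φ) : Forces v y φ := by
  induction φ generalizing x y with
  | var n => exact hv n hxy h
  | bot => exact h.elim
  | and φ ψ ihφ ihψ => exact ⟨ihφ hxy h.1, ihψ hxy h.2⟩
  | or φ ψ ihφ ihψ => exact h.imp (ihφ hxy) (ihψ hxy)
  | imp φ ψ _ _ => exact fun z hyz => h z (hxy.trans hyz)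

theorem forces_bigConj {v : ℕ → Set X} {x : X} {l : List IForm} :
    Forces v x (bigConj l) ↔ ∀ φ ∈ l, Forces v x φ := by
  induction l with
  | nil => exact iff_of_true (fun _ _ h => h) (by simp)
  | cons a l ih => simp only [bigConj, Forces, ih, List.forall_mem_cons]

theorem forces_preimage_val_iff {x : X} (v : ℕ → Set X) (φ : IForm) (y : {z : X // x ≤ z}) :
    Forces (fun n => Subtype.val ⁻¹' v n) y φ ↔ Forces v y.1 φ := by
  induction φ generalizing y with
  | var n => exact Iff.rfl
  | bot => exact Iff.rfl
  | and φ ψ ihφ ihψ => exact and_congr (ihφ y) (ihψ y)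
  | or φ ψ ihφ ihψ => exact or_congr (ihφ y) (ihψ y)
  | imp φ ψ ihφ ihψ =>
    refine ⟨fun h z hyz hφ => ?_, fun h z hyz hφ => (ihψ z).2 (h z.1 hyz ((ihφ z).1 hφ))⟩
    have hxz : x ≤ z := y.2.trans hyz
    exact (ihψ ⟨z, hxz⟩).1 (h ⟨z, hxz⟩ hyz ((ihφ ⟨z, hxz⟩).2 hφ))

theorem not_validIn_of_not_forces {v : ℕ → Set X} (hv : ∀ n, IsUpperSet (v n)) {x : X}
    {φ : IForm} (h : ¬ Forces v x φ) : ¬ ValidIn {z : X // x ≤ z} φ := fun hφ =>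
  h <| (forces_preimage_val_iff v φ ⟨x, le_rfl⟩).1 <|
    hφ _ (fun n _ _ hab ha => hv n hab ha) ⟨x, le_rfl⟩

theorem ValidIn.restrict {φ : IForm} (hφ : ValidIn X φ) (x : X) :
    ValidIn {z : X // x ≤ z} φ := by
  intro w hw y
  have hW : ∀ n, IsUpperSet (Subtype.val '' w n) := by
    rintro n a b hab ⟨a', ha', rfl⟩
    exact ⟨⟨b, a'.2.trans hab⟩, hw n hab ha', rfl⟩
  have hpre : (fun n => Subtype.val ⁻¹' (Subtype.val '' w n)) = w :=
    funext fun n => Set.preimage_image_eq _ Subtype.val_injective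
  simpa only [hpre] using (forces_preimage_val_iff _ φ y).2 (hφ _ hW y.1)

def truthUps {v : ℕ → Set X} (hv : ∀ n, IsUpperSet (v n)) (φ : IForm) : Ups X :=
  ⟨{x | Forces v x φ}, fun _ _ hab h => Forces.mono hv hab h⟩

end Kripke

section Diagram

variable {X : Type} [Preorder X] (g : Ups X → ℕ)

/-- The variable `p_U`, for a naming `g` of the upsets by variable indices. -/
def upsVar (U : Ups X) : IForm := var (g U)

def diagramClause (U V : Ups X) : IForm :=
  ((upsVar g (upsInter U V)).biimp ((upsVar g U).and (upsVar g V))).and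
    (((upsVar g (upsUnion U V)).biimp ((upsVar g U).or (upsVar g V))).and
      ((upsVar g (upsHimp U V)).biimp ((upsVar g U).imp (upsVar g V))))

/-- The formula `δ` of the Jankov formula, with the upsets enumerated by `all`. -/
def diagram (all : List (Ups X)) : IForm :=
  (bigConj (all.map fun U => bigConj (all.map fun V => diagramClause g U V))).and
    ((upsVar g upsEmpty).biimp bot)

/-- The valuation `p_U ↦ U`. -/
def canonicalVal (n : ℕ) : Set X := ⋃ (U : Ups X) (_ : g U = n), U.1

variable {g}

theorem Derivable.diagramClause_of_diagram {all : List (Ups X)} (hall : ∀ U, U ∈ all)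
    {Γ : List IForm} (hδ : Derivable Γ (diagram g all)) (U V : Ups X) :
    Derivable Γ (diagramClause g U V) :=
  (hδ.andE1.bigConj_elim (List.mem_map_of_mem (hall U))).bigConj_elim
    (List.mem_map_of_mem (hall V))

theorem Derivable.subst_biimp_truthUps {all : List (Ups X)} (hall : ∀ U, U ∈ all)
    {Γ : List IForm} (hδ : Derivable Γ (diagram g all)) {v : ℕ → Set X}
    (hv : ∀ n, IsUpperSet (v n)) (φ : IForm) :
    Derivable Γ ((φ.subst fun n => upsVar g ⟨v n, hv n⟩).biimp (upsVar g (truthUps hv φ))) := by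
  have hclause := hδ.diagramClause_of_diagram hall
  induction φ with
  | var n => exact Derivable.biimp_refl
  | bot =>
    have hbot : truthUps hv bot = upsEmpty :=
      Subtype.ext (Set.eq_empty_of_forall_notMem fun _ h => h)
    rw [hbot]
    exact hδ.andE2.biimp_symm
  | and φ ψ ihφ ihψ =>
    have hand : truthUps hv (φ.and ψ) = upsInter (truthUps hv φ) (truthUps hv ψ) := rfl
    rw [hand]
    exact (ihφ.and_congr ihψ).biimp_trans (hclause _ _).andE1.biimp_symm
  | or φ ψ ihφ ihψ =>
    have hor : truthUps hv (φ.or ψ) = upsUnion (truthUps hv φ) (truthUps hv ψ) := rfl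
    rw [hor]
    exact (ihφ.or_congr ihψ).biimp_trans (hclause _ _).andE2.andE1.biimp_symm
  | imp φ ψ ihφ ihψ =>
    have himp : truthUps hv (φ.imp ψ) = upsHimp (truthUps hv φ) (truthUps hv ψ) := rfl
    rw [himp]
    exact (ihφ.imp_congr ihψ).biimp_trans (hclause _ _).andE2.andE2.biimp_symm

theorem ipc_subst_imp_diagram_imp {all : List (Ups X)} (hall : ∀ U, U ∈ all)
    {v : ℕ → Set X} (hv : ∀ n, IsUpperSet (v n)) {φ : IForm} {s : Ups X}
    (hs : (truthUps hv φ).1 ⊆ s.1) :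
    IPC ((φ.subst fun n => upsVar g ⟨v n, hv n⟩).imp ((diagram g all).imp (upsVar g s))) := by
  let Γ := [diagram g all, φ.subst fun n => upsVar g ⟨v n, hv n⟩]
  have hδ : Derivable Γ (diagram g all) := .head
  have hφ : Derivable Γ (upsVar g (truthUps hv φ)) :=
    (hδ.subst_biimp_truthUps hall hv φ).biimp_mp (.hyp (by simp [Γ]))
  have hunion : upsUnion (truthUps hv φ) s = s := Subtype.ext (Set.union_eq_right.2 hs)
  have hs : Derivable Γ (upsVar g s) := by
    have := (hδ.diagramClause_of_diagram hall (truthUps hv φ) s).andE2.andE1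
    rw [hunion] at this
    exact this.biimp_symm.biimp_mp hφ.orI1
  exact hs.imp_intro.imp_intro.of_ipc_nil

theorem forces_upsVar_canonicalVal (hg : g.Injective) {x : X} {U : Ups X} :
    Forces (canonicalVal g) x (upsVar g U) ↔ x ∈ U.1 := by
  simp only [upsVar, Forces, canonicalVal, Set.mem_iUnion]
  exact ⟨fun ⟨V, hV, hx⟩ => hg hV ▸ hx, fun hx => ⟨U, rfl, hx⟩⟩

theorem forces_diagram_canonicalVal (hg : g.Injective) (all : List (Ups X)) (x : X) :
    Forces (canonicalVal g) x (diagram g all) := by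
  simp only [diagram, diagramClause, biimp, Forces, forces_bigConj, List.mem_map,
    forall_exists_index, and_imp, forall_apply_eq_imp_iff₂, forces_upsVar_canonicalVal hg]
  exact ⟨fun U _ V _ => ⟨⟨fun _ _ => id, fun _ _ => And.intro⟩, ⟨fun _ _ => id, fun _ _ => id⟩,
    fun _ _ => id, fun _ _ => id⟩, fun _ _ => id, fun _ _ => False.elim⟩

theorem isUpperSet_canonicalVal (n : ℕ) : IsUpperSet (canonicalVal g n) := by
  simp only [canonicalVal]
  exact isUpperSet_iUnion₂ fun U _ => U.2

end Diagram

section Enumeration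

variable (X : Type) [Preorder X] [Finite X]

noncomputable def upsIndex : Ups X → ℕ :=
  letI : Fintype (Ups X) := Fintype.ofFinite _
  fun U => Fintype.equivFin (Ups X) U

noncomputable def upsList : List (Ups X) :=
  letI : Fintype (Ups X) := Fintype.ofFinite _
  (List.finRange (Fintype.card (Ups X))).map (Fintype.equivFin (Ups X)).symm

theorem upsIndex_injective : (upsIndex X).Injective := by
  let _ : Fintype (Ups X) := Fintype.ofFinite _
  exact fun U V h => (Fintype.equivFin (Ups X)).injective (Fin.val_injective h)

variable {X} in
theorem mem_upsList (U : Ups X) : U ∈ upsList X := by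
  let _ : Fintype (Ups X) := Fintype.ofFinite _
  exact List.mem_map.2 ⟨Fintype.equivFin (Ups X) U, List.mem_finRange _, by simp⟩

end Enumeration

section Jankov

variable {X : Type} [PartialOrder X] {r : X} (hr : ∀ x, r ≤ x)

def upsRootCompl : Ups X :=
  ⟨Set.univ \ {r}, fun a _ hab ha =>
    ⟨trivial, fun hb => ha.2 (le_antisymm (hb ▸ hab) (hr a))⟩⟩

variable [Fintype X]

theorem jankov_eq :
    jankov X r hr =
      (diagram (upsIndex X) (upsList X)).imp (upsVar (upsIndex X) (upsRootCompl hr)) :=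
  rfl

theorem not_validIn_jankov : ¬ ValidIn X (jankov X r hr) := fun h => by
  have hs := (forces_upsVar_canonicalVal (upsIndex_injective X)).1 <|
    h _ isUpperSet_canonicalVal r r le_rfl (forces_diagram_canonicalVal (upsIndex_injective X) _ r)
  exact hs.2 rfl

theorem jankov_mem_of_not_validLogic {L : Set IForm} (hL : SuperIntuitionistic L)
    (hX : ¬ ValidLogic X L) : jankov X r hr ∈ L := by
  simp only [ValidLogic, ValidIn, not_forall] at hX
  obtain ⟨φ, hφL, v, hv, x, hx⟩ := hX
  rw [jankov_eq]
  have hs : (truthUps hv φ).1 ⊆ (upsRootCompl hr).1 := fun y hy =>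
    ⟨trivial, fun hyr => hx (Forces.mono hv (hyr ▸ hr x) hy)⟩
  exact hL.2.1 _ _ (hL.1 _ (ipc_subst_imp_diagram_imp mem_upsList hv hs)) (hL.2.2 φ _ hφL)

end Jankov

theorem ipcPlus_subset {Ax L : Set IForm} (hL : SuperIntuitionistic L) (h : Ax ⊆ L) :
    IPCPlus Ax ⊆ L :=
  fun _ hφ => hφ L hL h

theorem subset_ipcPlus (Ax : Set IForm) : Ax ⊆ IPCPlus Ax :=
  fun _ hφ _ _ h => h hφ

theorem subset_lPlus_iff {L L' : Set IForm} :
    L' ⊆ LPlus L ↔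
      ∀ (X : Type) [Fintype X] [PartialOrder X], ValidLogic X L → ValidLogic X L' :=
  ⟨fun h X _ _ hX _ hφ => h hφ X hX, fun h _ hφ X _ _ hX => h X hX _ hφ⟩

theorem validLogic_of_lMinus_subset {L L' : Set IForm} (h : LMinus L ⊆ L') {X : Type}
    [Fintype X] [PartialOrder X] (hX : ValidLogic X L') : ValidLogic X L := by
  by_contra hXL
  simp only [ValidLogic, ValidIn, not_forall] at hXL
  obtain ⟨φ, hφ, v, hv, x, hx⟩ := hXL
  let _ : Fintype {z : X // x ≤ z} := Fintype.ofFinite _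
  have hroot : ∀ z : {z : X // x ≤ z}, ⟨x, le_rfl⟩ ≤ z := fun z => z.2
  have hJ : jankov _ _ hroot ∈ L' :=
    h <| subset_ipcPlus _
      ⟨_, _, _, _, hroot, fun hS => not_validIn_of_not_forces hv hx (hS φ hφ), rfl⟩
  exact not_validIn_jankov hroot ((hX _ hJ).restrict x)

theorem lMinus_subset_iff {L L' : Set IForm} (hL' : SuperIntuitionistic L') :
    LMinus L ⊆ L' ↔
      ∀ (X : Type) [Fintype X] [PartialOrder X], ValidLogic X L' → ValidLogic X L := by
  refine ⟨fun h X _ _ => validLogic_of_lMinus_subset h, fun h => ipcPlus_subset hL' ?_⟩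
  rintro _ ⟨X, _, _, r, hr, hXL, rfl⟩
  exact jankov_mem_of_not_validLogic hr hL' (mt (h X) hXL)

theorem fmpSpan_eq_interval_general (L : Set IForm) :
    fmpSpan L = {L' | SuperIntuitionistic L' ∧ LMinus L ⊆ L' ∧ L' ⊆ LPlus L} := by
  ext L'
  constructor
  · rintro ⟨hL', hsame⟩
    exact ⟨hL', (lMinus_subset_iff hL').2 fun X _ _ => (hsame X).2,
      subset_lPlus_iff.2 fun X _ _ => (hsame X).1⟩
  · rintro ⟨hL', hminus, hplus⟩
    exact ⟨hL', fun X _ _ => ⟨subset_lPlus_iff.1 hplus X, (lMinus_subset_iff hL').1 hminus X⟩⟩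

/-- **Theorem (fmp span is an interval).** For every si-logic `L`, the fmp span
of `L` is exactly the interval `[L⁻, L⁺]` in the lattice of si-logics. -/
theorem fmpSpan_eq_interval (L : Set IForm) (hL : SuperIntuitionistic L) :
    fmpSpan L = {L' | SuperIntuitionistic L' ∧ LMinus L ⊆ L' ∧ L' ⊆ LPlus L} :=
  fmpSpan_eq_interval_general L
end

section
/- Every locally tabular si-logic has degree of fmp equal to 1. -/
/-- `φ` only uses the variables `p₀, …, p_{n-1}`. -/
def UsesVarsLt (n : ℕ) : IForm → Prop
  | .var k => k < n
  | .bot => True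
  | .and φ ψ => UsesVarsLt n φ ∧ UsesVarsLt n ψ
  | .or φ ψ => UsesVarsLt n φ ∧ UsesVarsLt n ψ
  | .imp φ ψ => UsesVarsLt n φ ∧ UsesVarsLt n ψ

/-- An si-logic `L` is locally tabular if for each `n` there are, up to
`L`-provable equivalence, only finitely many formulas in the first `n`
variables. -/
def LocallyTabular (L : Set IForm) : Prop :=
  ∀ n : ℕ, ∃ S : Finset IForm, ∀ φ, UsesVarsLt n φ → ∃ ψ ∈ S, φ.biimp ψ ∈ L


/-!
Let `T` be a prime theory of a logic `M` in the variables `p₀, …, p_{n-1}` whose Lindenbaum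
quotient is finite. Its canonical frame (the prime extensions of `T`) is finite and every upset
of it is definable by a formula, so the frame validates `M` and hence every logic `M'` with the
same finite frames; by the truth lemma `T` contains the `n`-variable theorems of `M'`. Thus
`M' ⊆ M` as soon as every prime `M`-theory has finite quotient.

For `M = L` locally tabular this is immediate, giving `L' ⊆ L`. For `M = L'`, the operation
tables of the finite `n`-generated `L`-algebra are a formula `ψ ∈ L`, and every prime theory
containing `ψ` has finite quotient. If a prime `L'`-theory `T` omits `ψ`, extend it to a prime
theory `T'` maximal among those omitting `ψ`: its proper prime extensions contain `ψ`, hence all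
`n`-variable theorems of `L`, which makes the quotient of `T'` finite as well. But then `ψ ∈ T'`.
-/

theorem UsesVarsLt.mono {m n : ℕ} (h : m ≤ n) : ∀ {φ : IForm}, UsesVarsLt m φ → UsesVarsLt n φ
  | .var _, hφ => lt_of_lt_of_le hφ h
  | .bot, _ => trivial
  | .and _ _, hφ => ⟨mono h hφ.1, mono h hφ.2⟩
  | .or _ _, hφ => ⟨mono h hφ.1, mono h hφ.2⟩
  | .imp _ _, hφ => ⟨mono h hφ.1, mono h hφ.2⟩

theorem exists_usesVarsLt (φ : IForm) : ∃ n, UsesVarsLt n φ := by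
  induction φ with
  | var k => exact ⟨k + 1, k.lt_succ_self⟩
  | bot => exact ⟨0, trivial⟩
  | and a b iha ihb | or a b iha ihb | imp a b iha ihb =>
    obtain ⟨m, hm⟩ := iha
    obtain ⟨m', hm'⟩ := ihb
    exact ⟨max m m', hm.mono (le_max_left _ _), hm'.mono (le_max_right _ _)⟩

theorem usesVarsLt_subst {n : ℕ} {σ : ℕ → IForm} (hσ : ∀ i, UsesVarsLt n (σ i)) :
    ∀ φ : IForm, UsesVarsLt n (φ.subst σ)
  | .var k => hσ k
  | .bot => trivial
  | .and a b => ⟨usesVarsLt_subst hσ a, usesVarsLt_subst hσ b⟩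
  | .or a b => ⟨usesVarsLt_subst hσ a, usesVarsLt_subst hσ b⟩
  | .imp a b => ⟨usesVarsLt_subst hσ a, usesVarsLt_subst hσ b⟩

theorem UsesVarsLt.biimp {n : ℕ} {a b : IForm} (ha : UsesVarsLt n a) (hb : UsesVarsLt n b) :
    UsesVarsLt n (a.biimp b) :=
  ⟨⟨ha, hb⟩, ⟨hb, ha⟩⟩

theorem forces_subst {X : Type} [Preorder X] (v : ℕ → Set X) (σ : ℕ → IForm) (φ : IForm)
    (x : X) : Forces v x (φ.subst σ) ↔ Forces (fun i => {y | Forces v y (σ i)}) x φ := by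
  induction φ generalizing x with
  | var i => rfl
  | bot => rfl
  | and a b iha ihb => exact and_congr (iha x) (ihb x)
  | or a b iha ihb => exact or_congr (iha x) (ihb x)
  | imp a b iha ihb => exact forall₂_congr fun y _ => imp_congr (iha y) (ihb y)

theorem SameFinPosets.symm {L L' : Set IForm} (h : SameFinPosets L L') : SameFinPosets L' L :=
  fun X _ _ => (h X).symm

inductive Derives (Γ : Set IForm) : IForm → Prop
  | hyp {φ : IForm} : φ ∈ Γ → Derives Γ φ
  | ax {φ : IForm} : IPC φ → Derives Γ φ
  | mp {φ ψ : IForm} : Derives Γ (φ.imp ψ) → Derives Γ φ → Derives Γ ψ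

namespace Derives

variable {Γ Δ : Set IForm} {a b c a' b' : IForm}

theorem mono (h : Derives Γ a) (hΓΔ : Γ ⊆ Δ) : Derives Δ a := by
  induction h with
  | hyp h => exact hyp (hΓΔ h)
  | ax h => exact ax h
  | mp _ _ ih₁ ih₂ => exact mp ih₁ ih₂

theorem weaken (h : Derives Γ b) : Derives (insert a Γ) b :=
  h.mono (Set.subset_insert _ _)

theorem head : Derives (insert a Γ) a :=
  hyp (Set.mem_insert _ _)

theorem of_mem_right (h : a ∈ Δ) : Derives (Γ ∪ Δ) a :=
  hyp (Or.inr h)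

theorem imp_self : Derives Γ (a.imp a) :=
  mp (mp (ax (IPC.ax2 a (a.imp a) a)) (ax (IPC.ax1 a (a.imp a)))) (ax (IPC.ax1 a a))

theorem imp_intro (h : Derives (insert a Γ) b) : Derives Γ (a.imp b) := by
  induction h with
  | @hyp φ h =>
    rcases h with rfl | h
    · exact imp_self
    · exact mp (ax (IPC.ax1 φ a)) (hyp h)
  | @ax φ h => exact mp (ax (IPC.ax1 φ a)) (ax h)
  | @mp φ ψ _ _ ih₁ ih₂ => exact mp (mp (ax (IPC.ax2 a φ ψ)) ih₁) ih₂

theorem exists_of_sUnion {M : Set IForm} {c : Set (Set IForm)} (hc : IsChain (· ⊆ ·) c)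
    (hne : c.Nonempty) (h : Derives (M ∪ ⋃₀ c) a) : ∃ S ∈ c, Derives (M ∪ S) a := by
  induction h with
  | hyp h =>
    rcases h with hM | ⟨S, hS, hφ⟩
    · obtain ⟨S, hS⟩ := hne
      exact ⟨S, hS, hyp (Or.inl hM)⟩
    · exact ⟨S, hS, hyp (Or.inr hφ)⟩
  | ax h =>
    obtain ⟨S, hS⟩ := hne
    exact ⟨S, hS, ax h⟩
  | mp _ _ ih₁ ih₂ =>
    obtain ⟨S₁, hS₁, h₁⟩ := ih₁
    obtain ⟨S₂, hS₂, h₂⟩ := ih₂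
    rcases hc.total hS₁ hS₂ with h | h
    · exact ⟨S₂, hS₂, mp (h₁.mono (Set.union_subset_union_right M h)) h₂⟩
    · exact ⟨S₁, hS₁, mp h₁ (h₂.mono (Set.union_subset_union_right M h))⟩

theorem and_intro (ha : Derives Γ a) (hb : Derives Γ b) : Derives Γ (a.and b) :=
  mp (mp (ax (IPC.andI a b)) ha) hb

theorem and_left (h : Derives Γ (a.and b)) : Derives Γ a :=
  mp (ax (IPC.andE1 a b)) h

theorem and_right (h : Derives Γ (a.and b)) : Derives Γ b :=
  mp (ax (IPC.andE2 a b)) h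

theorem or_inl (h : Derives Γ a) : Derives Γ (a.or b) :=
  mp (ax (IPC.orI1 a b)) h

theorem or_inr (h : Derives Γ b) : Derives Γ (a.or b) :=
  mp (ax (IPC.orI2 a b)) h

theorem or_elim (h : Derives Γ (a.or b)) (ha : Derives (insert a Γ) c)
    (hb : Derives (insert b Γ) c) : Derives Γ c :=
  mp (mp (mp (ax (IPC.orE a b c)) (imp_intro ha)) (imp_intro hb)) h

theorem bot_elim (h : Derives Γ IForm.bot) : Derives Γ a :=
  mp (ax (IPC.exfalso a)) h

theorem imp_trans (h₁ : Derives Γ (a.imp b)) (h₂ : Derives Γ (b.imp c)) :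
    Derives Γ (a.imp c) :=
  imp_intro (mp h₂.weaken (mp h₁.weaken head))

theorem biimp_symm (h : Derives Γ (a.biimp b)) : Derives Γ (b.biimp a) :=
  and_intro (and_right h) (and_left h)

theorem biimp_trans (h₁ : Derives Γ (a.biimp b)) (h₂ : Derives Γ (b.biimp c)) :
    Derives Γ (a.biimp c) :=
  and_intro (imp_trans (and_left h₁) (and_left h₂)) (imp_trans (and_right h₂) (and_right h₁))

theorem congr_and (ha : Derives Γ (a.biimp a')) (hb : Derives Γ (b.biimp b')) :
    Derives Γ ((a.and b).biimp (a'.and b')) := by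
  have mono_and : ∀ {x x' y y' : IForm}, Derives Γ (x.imp x') → Derives Γ (y.imp y') →
      Derives Γ ((x.and y).imp (x'.and y')) := fun hx hy =>
    imp_intro (and_intro (mp hx.weaken (and_left head)) (mp hy.weaken (and_right head)))
  exact and_intro (mono_and (and_left ha) (and_left hb)) (mono_and (and_right ha) (and_right hb))

theorem congr_or (ha : Derives Γ (a.biimp a')) (hb : Derives Γ (b.biimp b')) :
    Derives Γ ((a.or b).biimp (a'.or b')) := by
  have mono_or : ∀ {x x' y y' : IForm}, Derives Γ (x.imp x') → Derives Γ (y.imp y') →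
      Derives Γ ((x.or y).imp (x'.or y')) := fun hx hy =>
    imp_intro (or_elim head (or_inl (mp hx.weaken.weaken head))
      (or_inr (mp hy.weaken.weaken head)))
  exact and_intro (mono_or (and_left ha) (and_left hb)) (mono_or (and_right ha) (and_right hb))

theorem congr_imp (ha : Derives Γ (a.biimp a')) (hb : Derives Γ (b.biimp b')) :
    Derives Γ ((a.imp b).biimp (a'.imp b')) := by
  have mono_imp : ∀ {x x' y y' : IForm}, Derives Γ (x'.imp x) → Derives Γ (y.imp y') →
      Derives Γ ((x.imp y).imp (x'.imp y')) := fun hx hy =>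
    imp_intro (imp_intro (mp hy.weaken.weaken (mp head.weaken (mp hx.weaken.weaken head))))
  exact and_intro (mono_imp (and_right ha) (and_left hb)) (mono_imp (and_left ha) (and_right hb))

theorem exists_conj {n : ℕ} {S : Set IForm} (hS : S.Finite) (hSn : ∀ s ∈ S, UsesVarsLt n s) :
    ∃ χ, UsesVarsLt n χ ∧ ∀ Γ, Derives Γ χ ↔ ∀ s ∈ S, Derives Γ s := by
  induction S, hS using Set.Finite.induction_on with
  | empty => exact ⟨IForm.bot.imp IForm.bot, ⟨trivial, trivial⟩, fun Γ => by simp [imp_self]⟩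
  | @insert a S _ _ ih =>
    rw [Set.forall_mem_insert] at hSn
    obtain ⟨χ, hχn, hχ⟩ := ih hSn.2
    refine ⟨a.and χ, ⟨hSn.1, hχn⟩, fun Γ => ?_⟩
    rw [Set.forall_mem_insert, ← hχ]
    exact ⟨fun h => ⟨and_left h, and_right h⟩, fun h => and_intro h.1 h.2⟩

end Derives

open Derives

theorem SuperIntuitionistic.mem_of_derives {L : Set IForm} (hL : SuperIntuitionistic L)
    {φ : IForm} (h : Derives L φ) : φ ∈ L := by
  induction h with
  | hyp h => exact h
  | ax h => exact hL.1 _ h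
  | mp _ _ ih₁ ih₂ => exact hL.2.1 _ _ ih₁ ih₂

/-- Theories are restricted to the variables `p₀, …, p_{n-1}`, so that their Lindenbaum
quotients can be finite. -/
structure IsPrimeTheory (M : Set IForm) (n : ℕ) (T : Set IForm) : Prop where
  usesVarsLt : ∀ χ ∈ T, UsesVarsLt n χ
  closed : ∀ χ, UsesVarsLt n χ → Derives (M ∪ T) χ → χ ∈ T
  bot_not_mem : IForm.bot ∉ T
  prime : ∀ a b, a.or b ∈ T → a ∈ T ∨ b ∈ T

namespace IsPrimeTheory

variable {M T : Set IForm} {n : ℕ} {a b : IForm}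

theorem mem_iff_derives (hT : IsPrimeTheory M n T) (ha : UsesVarsLt n a) :
    a ∈ T ↔ Derives (M ∪ T) a :=
  ⟨of_mem_right, hT.closed a ha⟩

theorem mem_of_mem_logic (hT : IsPrimeTheory M n T) (h : a ∈ M) (ha : UsesVarsLt n a) : a ∈ T :=
  hT.closed a ha (hyp (Or.inl h))

theorem mp_mem (hT : IsPrimeTheory M n T) (h : a.imp b ∈ T) (ha : a ∈ T) : b ∈ T :=
  hT.closed b (hT.usesVarsLt _ h).2 (mp (of_mem_right h) (of_mem_right ha))

theorem mem_and_iff (hT : IsPrimeTheory M n T) (ha : UsesVarsLt n a) (hb : UsesVarsLt n b) :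
    a.and b ∈ T ↔ a ∈ T ∧ b ∈ T :=
  ⟨fun h => ⟨hT.closed a ha (and_left (of_mem_right h)),
      hT.closed b hb (and_right (of_mem_right h))⟩,
    fun h => hT.closed _ ⟨ha, hb⟩ (and_intro (of_mem_right h.1) (of_mem_right h.2))⟩

theorem mem_or_iff (hT : IsPrimeTheory M n T) (ha : UsesVarsLt n a) (hb : UsesVarsLt n b) :
    a.or b ∈ T ↔ a ∈ T ∨ b ∈ T :=
  ⟨hT.prime a b, fun h => h.elim (fun h => hT.closed _ ⟨ha, hb⟩ (or_inl (of_mem_right h)))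
    (fun h => hT.closed _ ⟨ha, hb⟩ (or_inr (of_mem_right h)))⟩

theorem mem_iff_of_biimp_mem (hT : IsPrimeTheory M n T) (h : a.biimp b ∈ T) : a ∈ T ↔ b ∈ T :=
  have hab := (hT.mem_and_iff (hT.usesVarsLt _ h).1 (hT.usesVarsLt _ h).2).1 h
  ⟨hT.mp_mem hab.1, hT.mp_mem hab.2⟩

end IsPrimeTheory

section Lindenbaum

variable {M T₀ : Set IForm} {n : ℕ} {γ : IForm}

theorem exists_maximal_not_derives (hT₀ : ∀ χ ∈ T₀, UsesVarsLt n χ)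
    (h : ¬ Derives (M ∪ T₀) γ) :
    ∃ T, T₀ ⊆ T ∧ Maximal (fun S => (∀ χ ∈ S, UsesVarsLt n χ) ∧ ¬ Derives (M ∪ S) γ) T := by
  refine zorn_subset_nonempty {S | (∀ χ ∈ S, UsesVarsLt n χ) ∧ ¬ Derives (M ∪ S) γ}
    (fun c hc hchain hne => ⟨⋃₀ c, ⟨?_, fun hd => ?_⟩, fun S hS => Set.subset_sUnion_of_mem hS⟩)
    T₀ ⟨hT₀, h⟩
  · rintro χ ⟨S, hS, hχ⟩
    exact (hc hS).1 χ hχ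
  · obtain ⟨S, hS, hdS⟩ := exists_of_sUnion hchain hne hd
    exact (hc hS).2 hdS

theorem exists_isPrimeTheory_superset (hT₀ : ∀ χ ∈ T₀, UsesVarsLt n χ) (hγ : UsesVarsLt n γ)
    (h : ¬ Derives (M ∪ T₀) γ) :
    ∃ T, IsPrimeTheory M n T ∧ T₀ ⊆ T ∧ γ ∉ T ∧
      ∀ T', IsPrimeTheory M n T' → T ⊂ T' → γ ∈ T' := by
  obtain ⟨T, hT₀T, ⟨hTn, hTγ⟩, hmax⟩ := exists_maximal_not_derives hT₀ h
  have hinsert : ∀ χ, UsesVarsLt n χ → χ ∉ T → Derives (insert χ (M ∪ T)) γ := by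
    intro χ hχ hχT
    by_contra hd
    refine hχT (hmax ⟨Set.forall_mem_insert.2 ⟨hχ, hTn⟩, ?_⟩ (Set.subset_insert χ T)
      (Set.mem_insert χ T))
    rwa [Set.union_insert]
  have hclosed : ∀ χ, UsesVarsLt n χ → Derives (M ∪ T) χ → χ ∈ T := fun χ hχ hd =>
    by_contra fun hχT => hTγ (mp (imp_intro (hinsert χ hχ hχT)) hd)
  refine ⟨T, ⟨hTn, hclosed, fun hbot => hTγ (bot_elim (of_mem_right hbot)), fun a b hab => ?_⟩,
    hT₀T, fun hγT => hTγ (of_mem_right hγT), fun T' hT' hTT' => by_contra fun hγT' => ?_⟩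
  · by_contra! hnab
    exact hTγ (or_elim (of_mem_right hab) (hinsert a (hTn _ hab).1 hnab.1)
      (hinsert b (hTn _ hab).2 hnab.2))
  · exact hTT'.not_subset (hmax ⟨hT'.usesVarsLt, fun hd => hγT' (hT'.closed γ hγ hd)⟩ hTT'.subset)

end Lindenbaum

theorem IsPrimeTheory.imp_mem_iff {M T : Set IForm} {n : ℕ} {a b : IForm}
    (hT : IsPrimeTheory M n T) (ha : UsesVarsLt n a) (hb : UsesVarsLt n b) :
    a.imp b ∈ T ↔ ∀ T', IsPrimeTheory M n T' → T ⊆ T' → a ∈ T' → b ∈ T' := by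
  refine ⟨fun h T' hT' hTT' haT' => hT'.mp_mem (hTT' h) haT', fun h => by_contra fun hab => ?_⟩
  have hnd : ¬ Derives (M ∪ insert a T) b := fun hd =>
    hab (hT.closed (a.imp b) ⟨ha, hb⟩ (imp_intro (by rwa [Set.union_insert] at hd)))
  obtain ⟨T', hT', hsub, hbT', -⟩ :=
    exists_isPrimeTheory_superset (Set.forall_mem_insert.2 ⟨ha, hT.usesVarsLt⟩) hb hnd
  exact hbT' (h T' hT' ((Set.subset_insert a T).trans hsub) (hsub (Set.mem_insert a T)))

theorem SuperIntuitionistic.mem_of_forall_isPrimeTheory {M : Set IForm} {n : ℕ} {χ : IForm}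
    (hM : SuperIntuitionistic M) (hχ : UsesVarsLt n χ)
    (h : ∀ T, IsPrimeTheory M n T → χ ∈ T) : χ ∈ M := by
  by_contra hχM
  obtain ⟨T, hT, -, hχT, -⟩ := exists_isPrimeTheory_superset (T₀ := ∅) (by simp) hχ
    fun hd => hχM (hM.mem_of_derives (by simpa using hd))
  exact hχT (h T hT)

theorem IsPrimeTheory.exists_disj {n : ℕ} {S : Set IForm} (hS : S.Finite)
    (hSn : ∀ s ∈ S, UsesVarsLt n s) :
    ∃ χ, UsesVarsLt n χ ∧ ∀ M G, IsPrimeTheory M n G → (χ ∈ G ↔ ∃ s ∈ S, s ∈ G) := by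
  induction S, hS using Set.Finite.induction_on with
  | empty => exact ⟨IForm.bot, trivial, fun M G hG => by simp [hG.bot_not_mem]⟩
  | @insert a S _ _ ih =>
    rw [Set.forall_mem_insert] at hSn
    obtain ⟨χ, hχn, hχ⟩ := ih hSn.2
    refine ⟨a.or χ, ⟨hSn.1, hχn⟩, fun M G hG => ?_⟩
    rw [hG.mem_or_iff hSn.1 hχn, hχ M G hG, Set.exists_mem_insert]

def Represents (n : ℕ) (T R : Set IForm) : Prop :=
  ∀ χ, UsesVarsLt n χ → ∃ r ∈ R, χ.biimp r ∈ T

/-- The `n`-variable Lindenbaum quotient of `T` is finite. -/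
def HasFiniteReps (n : ℕ) (T : Set IForm) : Prop :=
  ∃ R : Set IForm, R.Finite ∧ (∀ r ∈ R, UsesVarsLt n r) ∧ Represents n T R

namespace HasFiniteReps

variable {n : ℕ} {T : Set IForm}

theorem mono {T' : Set IForm} (h : HasFiniteReps n T)
    (hTT' : ∀ χ ∈ T, UsesVarsLt n χ → χ ∈ T') : HasFiniteReps n T' := by
  obtain ⟨R, hRfin, hRn, hR⟩ := h
  refine ⟨R, hRfin, hRn, fun χ hχ => ?_⟩
  obtain ⟨r, hr, hχr⟩ := hR χ hχ
  exact ⟨r, hr, hTT' _ hχr (hχ.biimp (hRn r hr))⟩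

theorem of_finite_image {β : Type*} (f : IForm → β) (hf : (f '' {χ | UsesVarsLt n χ}).Finite)
    (hT : ∀ χ χ', UsesVarsLt n χ → UsesVarsLt n χ' → f χ = f χ' → χ.biimp χ' ∈ T) :
    HasFiniteReps n T := by
  have : Nonempty IForm := ⟨IForm.bot⟩
  set D := {χ | UsesVarsLt n χ}
  refine ⟨Function.invFunOn f D '' (f '' D), hf.image _, ?_, fun χ hχ => ?_⟩
  · rintro _ ⟨_, ⟨χ, hχ, rfl⟩, rfl⟩
    exact Function.invFunOn_mem ⟨χ, hχ, rfl⟩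
  · obtain ⟨hmem, heq⟩ := Function.invFunOn_pos (f := f) ⟨χ, hχ, rfl⟩
    exact ⟨_, ⟨f χ, ⟨χ, hχ, rfl⟩, rfl⟩, hT _ _ hχ hmem heq.symm⟩

end HasFiniteReps

theorem LocallyTabular.hasFiniteReps {L : Set IForm} (hlt : LocallyTabular L)
    (hL : SuperIntuitionistic L) (n : ℕ) : HasFiniteReps n L := by
  obtain ⟨S, hS⟩ := hlt n
  choose! f hfS hf using hS
  refine .of_finite_image f (S.finite_toSet.subset ?_) fun χ χ' hχ hχ' he => ?_
  · rintro _ ⟨χ, hχ, rfl⟩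
    exact hfS χ hχ
  · exact hL.mem_of_derives (biimp_trans (hyp (hf χ hχ)) (biimp_symm (he ▸ hyp (hf χ' hχ'))))

def OneStep (n : ℕ) (R : Set IForm) : IForm → Prop
  | .var k => k < n
  | .bot => True
  | .and a b | .or a b | .imp a b => a ∈ R ∧ b ∈ R

theorem finite_setOf_oneStep {n : ℕ} {R : Set IForm} (hR : R.Finite) :
    {χ | OneStep n R χ}.Finite := by
  refine (((((Set.finite_Iio n).image IForm.var).union (Set.finite_singleton IForm.bot)).union
    (hR.image2 IForm.and hR)).union (hR.image2 IForm.or hR)).union (hR.image2 IForm.imp hR)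
    |>.subset ?_
  rintro (k | _ | ⟨a, b⟩ | ⟨a, b⟩ | ⟨a, b⟩) hχ <;> simp_all [OneStep]

theorem IsPrimeTheory.represents_of_oneStep {M T R : Set IForm} {n : ℕ}
    (hT : IsPrimeTheory M n T) (hRn : ∀ r ∈ R, UsesVarsLt n r)
    (h : ∀ χ, UsesVarsLt n χ → OneStep n R χ → ∃ r ∈ R, χ.biimp r ∈ T) : Represents n T R := by
  have close : ∀ {χ χ' : IForm}, Derives (M ∪ T) (χ.biimp χ') → UsesVarsLt n χ →
      UsesVarsLt n χ' → OneStep n R χ' → ∃ r ∈ R, χ.biimp r ∈ T := by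
    intro χ χ' hd hχ hχ' hone
    obtain ⟨r, hr, hχ'r⟩ := h χ' hχ' hone
    exact ⟨r, hr, hT.closed _ (hχ.biimp (hRn r hr)) (biimp_trans hd (of_mem_right hχ'r))⟩
  intro χ hχ
  induction χ with
  | var k => exact h _ hχ hχ
  | bot => exact h _ trivial trivial
  | and a b iha ihb =>
    obtain ⟨r₁, hr₁, h₁⟩ := iha hχ.1
    obtain ⟨r₂, hr₂, h₂⟩ := ihb hχ.2
    exact close (χ' := r₁.and r₂) (congr_and (of_mem_right h₁) (of_mem_right h₂)) hχ
      ⟨hRn _ hr₁, hRn _ hr₂⟩ ⟨hr₁, hr₂⟩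
  | or a b iha ihb =>
    obtain ⟨r₁, hr₁, h₁⟩ := iha hχ.1
    obtain ⟨r₂, hr₂, h₂⟩ := ihb hχ.2
    exact close (χ' := r₁.or r₂) (congr_or (of_mem_right h₁) (of_mem_right h₂)) hχ
      ⟨hRn _ hr₁, hRn _ hr₂⟩ ⟨hr₁, hr₂⟩
  | imp a b iha ihb =>
    obtain ⟨r₁, hr₁, h₁⟩ := iha hχ.1
    obtain ⟨r₂, hr₂, h₂⟩ := ihb hχ.2
    exact close (χ' := r₁.imp r₂) (congr_imp (of_mem_right h₁) (of_mem_right h₂)) hχ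
      ⟨hRn _ hr₁, hRn _ hr₂⟩ ⟨hr₁, hr₂⟩

/-- `ψ` is the conjunction of the operation tables of the `n`-variable Lindenbaum algebra
of `L`, written on a set of representatives. -/
theorem SuperIntuitionistic.exists_hasFiniteReps_formula {L : Set IForm} {n : ℕ}
    (hL : SuperIntuitionistic L) (hLn : HasFiniteReps n L) :
    ∃ ψ ∈ L, UsesVarsLt n ψ ∧ ∀ M T, IsPrimeTheory M n T → ψ ∈ T → HasFiniteReps n T := by
  obtain ⟨R, hRfin, hRn, hR⟩ := hLn
  set E := Set.image2 IForm.biimp {χ | OneStep n R χ ∧ UsesVarsLt n χ} R ∩ L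
  have hEfin : E.Finite :=
    (((finite_setOf_oneStep hRfin).subset fun _ hχ => hχ.1).image2 _ hRfin).subset
      Set.inter_subset_left
  obtain ⟨ψ, hψn, hψ⟩ := exists_conj hEfin (by
    rintro _ ⟨⟨χ, ⟨-, hχ⟩, r, hr, rfl⟩, -⟩
    exact hχ.biimp (hRn r hr))
  refine ⟨ψ, hL.mem_of_derives ((hψ L).2 fun e he => hyp he.2), hψn,
    fun M T hT hψT => ⟨R, hRfin, hRn, hT.represents_of_oneStep hRn fun χ hχ hone => ?_⟩⟩
  obtain ⟨r, hr, hχr⟩ := hR χ hχ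
  exact ⟨r, hr, hT.closed _ (hχ.biimp (hRn r hr))
    ((hψ (M ∪ T)).1 (of_mem_right hψT) _ ⟨⟨χ, ⟨hone, hχ⟩, r, hr, rfl⟩, hχr⟩)⟩

/-- The class of an `n`-variable formula modulo `T` is determined by its class modulo `L` and by
whether it lies in `T`, because every prime theory strictly above `T` contains the
`n`-variable theorems of `L`. -/
theorem IsPrimeTheory.hasFiniteReps_of_ssuperset {L M T : Set IForm} {n : ℕ}
    (hT : IsPrimeTheory M n T) (hLn : HasFiniteReps n L)
    (hext : ∀ T', IsPrimeTheory M n T' → T ⊂ T' → ∀ χ ∈ L, UsesVarsLt n χ → χ ∈ T') :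
    HasFiniteReps n T := by
  obtain ⟨R, hRfin, hRn, hR⟩ := hLn
  choose! ρ hρR hρL using hR
  have himp : ∀ a b, UsesVarsLt n a → UsesVarsLt n b → ρ a = ρ b → (a ∈ T ↔ b ∈ T) →
      a.imp b ∈ T := by
    intro a b ha hb hρ hab
    refine (hT.imp_mem_iff ha hb).2 fun T' hT' hTT' haT' => ?_
    rcases hTT'.eq_or_ssubset with rfl | hss
    · exact hab.1 haT'
    · have hρT' : ∀ χ, UsesVarsLt n χ → (χ ∈ T' ↔ ρ χ ∈ T') := fun χ hχ =>
        hT'.mem_iff_of_biimp_mem (hext T' hT' hss _ (hρL χ hχ) (hχ.biimp (hRn _ (hρR χ hχ))))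
      exact (hρT' b hb).2 (hρ ▸ (hρT' a ha).1 haT')
  refine .of_finite_image (fun χ => (ρ χ, χ ∈ T)) ((hRfin.prod Set.finite_univ).subset ?_)
    fun a b ha hb hab => ?_
  · rintro _ ⟨χ, hχ, rfl⟩
    exact ⟨hρR χ hχ, trivial⟩
  · obtain ⟨hρ, hab⟩ := Prod.mk.inj hab
    exact (hT.mem_and_iff (a := a.imp b) (b := b.imp a) ⟨ha, hb⟩ ⟨hb, ha⟩).2
      ⟨himp a b ha hb hρ (Iff.of_eq hab), himp b a hb ha hρ.symm (Iff.of_eq hab.symm)⟩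

abbrev CanonicalFrame (M : Set IForm) (n : ℕ) (T : Set IForm) : Type :=
  {G : Set IForm // IsPrimeTheory M n G ∧ T ⊆ G}

namespace CanonicalFrame

variable {M T : Set IForm} {n : ℕ}

def val : ℕ → Set (CanonicalFrame M n T) :=
  fun i => {G | IForm.var i ∈ G.1}

theorem isUpperSet_val (i : ℕ) : IsUpperSet (val (M := M) (n := n) (T := T) i) :=
  fun _ _ hle h => hle h

theorem forces_val_iff {φ : IForm} (G : CanonicalFrame M n T) (hφ : UsesVarsLt n φ) :
    Forces val G φ ↔ φ ∈ G.1 := by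
  induction φ generalizing G with
  | var i => rfl
  | bot => exact iff_of_false id G.2.1.bot_not_mem
  | and a b iha ihb =>
    exact (and_congr (iha G hφ.1) (ihb G hφ.2)).trans (G.2.1.mem_and_iff hφ.1 hφ.2).symm
  | or a b iha ihb =>
    exact (or_congr (iha G hφ.1) (ihb G hφ.2)).trans (G.2.1.mem_or_iff hφ.1 hφ.2).symm
  | imp a b iha ihb =>
    rw [G.2.1.imp_mem_iff hφ.1 hφ.2]
    refine ⟨fun h T' hT' hGT' haT' => ?_, fun h G' hGG' ha => ?_⟩
    · exact (ihb ⟨T', hT', G.2.2.trans hGT'⟩ hφ.2).1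
        (h ⟨T', hT', G.2.2.trans hGT'⟩ hGT' ((iha _ hφ.1).2 haT'))
    · exact (ihb G' hφ.2).2 (h G'.1 G'.2.1 hGG' ((iha G' hφ.1).1 ha))

theorem le_iff {R : Set IForm} (hR : Represents n T R) {G G' : CanonicalFrame M n T} :
    G ≤ G' ↔ ∀ r ∈ R, r ∈ G.1 → r ∈ G'.1 := by
  refine ⟨fun h r _ hr => h hr, fun h χ hχ => ?_⟩
  obtain ⟨r, hr, hχr⟩ := hR χ (G.2.1.usesVarsLt χ hχ)
  exact (G'.2.1.mem_iff_of_biimp_mem (G'.2.2 hχr)).2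
    (h r hr ((G.2.1.mem_iff_of_biimp_mem (G.2.2 hχr)).1 hχ))

theorem finite (h : HasFiniteReps n T) : Finite (CanonicalFrame M n T) := by
  obtain ⟨R, hRfin, -, hR⟩ := h
  have := hRfin.to_subtype
  refine Finite.of_injective (fun G (r : R) => r.1 ∈ G.1) fun G G' hGG' => ?_
  have hiff : ∀ r ∈ R, r ∈ G.1 ↔ r ∈ G'.1 := fun r hr => Iff.of_eq (congrFun hGG' ⟨r, hr⟩)
  exact le_antisymm ((le_iff hR).2 fun r hr => (hiff r hr).1)
    ((le_iff hR).2 fun r hr => (hiff r hr).2)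

/-- Every upset is definable: by the disjunction, over its points `G`, of the conjunction of
the representatives lying in `G`. -/
theorem exists_defining_formula (h : HasFiniteReps n T) (U : Set (CanonicalFrame M n T))
    (hU : IsUpperSet U) : ∃ χ, UsesVarsLt n χ ∧ ∀ G : CanonicalFrame M n T, χ ∈ G.1 ↔ G ∈ U := by
  have := finite (M := M) h
  obtain ⟨R, hRfin, hRn, hR⟩ := h
  have hδ : ∀ G : CanonicalFrame M n T, ∃ δ, UsesVarsLt n δ ∧
      ∀ G' : CanonicalFrame M n T, δ ∈ G'.1 ↔ G ≤ G' := by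
    intro G
    obtain ⟨δ, hδn, hδ⟩ := exists_conj (hRfin.subset (Set.inter_subset_left (t := G.1)))
      fun r hr => hRn r hr.1
    refine ⟨δ, hδn, fun G' => ?_⟩
    rw [le_iff hR, G'.2.1.mem_iff_derives hδn, hδ]
    exact ⟨fun h r hr hrG => (G'.2.1.mem_iff_derives (hRn r hr)).2 (h r ⟨hr, hrG⟩),
      fun h r hr => (G'.2.1.mem_iff_derives (hRn r hr.1)).1 (h r hr.1 hr.2)⟩
  choose δ hδn hδ using hδ
  obtain ⟨χ, hχn, hχ⟩ := IsPrimeTheory.exists_disj ((Set.toFinite U).image δ)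
    (by rintro _ ⟨G, -, rfl⟩; exact hδn G)
  refine ⟨χ, hχn, fun G' => (hχ M G'.1 G'.2.1).trans
    ⟨?_, fun h => ⟨δ G', ⟨G', h, rfl⟩, (hδ G' G').2 le_rfl⟩⟩⟩
  rintro ⟨_, ⟨G, hG, rfl⟩, hδG'⟩
  exact hU ((hδ G G').1 hδG') hG

theorem validLogic (hM : SuperIntuitionistic M) (h : HasFiniteReps n T) :
    ValidLogic (CanonicalFrame M n T) M := by
  intro ξ hξ w hw G
  choose σ hσn hσ using fun i => exists_defining_formula h (w i) (hw i)
  have hw' : w = fun i => {G' | Forces val G' (σ i)} :=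
    funext fun i => Set.ext fun G' => ((forces_val_iff G' (hσn i)).trans (hσ i G')).symm
  rw [hw', ← forces_subst, forces_val_iff G (usesVarsLt_subst hσn ξ)]
  exact G.2.1.mem_of_mem_logic (hM.2.2 ξ σ hξ) (usesVarsLt_subst hσn ξ)

end CanonicalFrame

theorem IsPrimeTheory.mem_of_sameFinPosets {M₁ M₂ T : Set IForm} {n : ℕ} {θ : IForm}
    (hM₁ : SuperIntuitionistic M₁) (hfin : SameFinPosets M₁ M₂) (hT : IsPrimeTheory M₁ n T)
    (h : HasFiniteReps n T) (hθ : θ ∈ M₂) (hθn : UsesVarsLt n θ) : θ ∈ T := by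
  have := CanonicalFrame.finite (M := M₁) h
  have := Fintype.ofFinite (CanonicalFrame M₁ n T)
  have hvalid := (hfin (CanonicalFrame M₁ n T)).1 (CanonicalFrame.validLogic hM₁ h)
  exact (CanonicalFrame.forces_val_iff ⟨T, hT, subset_rfl⟩ hθn).1
    (hvalid θ hθ _ CanonicalFrame.isUpperSet_val _)

theorem SameFinPosets.subset {M₁ M₂ : Set IForm} (hfin : SameFinPosets M₁ M₂)
    (hM₁ : SuperIntuitionistic M₁) (h : ∀ n T, IsPrimeTheory M₁ n T → HasFiniteReps n T) :
    M₂ ⊆ M₁ := by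
  intro θ hθ
  obtain ⟨n, hn⟩ := exists_usesVarsLt θ
  exact hM₁.mem_of_forall_isPrimeTheory hn fun T hT =>
    hT.mem_of_sameFinPosets hM₁ hfin (h n T hT) hθ hn

theorem LocallyTabular.hasFiniteReps_of_isPrimeTheory {L L' T : Set IForm} {n : ℕ}
    (hlt : LocallyTabular L) (hL : SuperIntuitionistic L) (hL' : SuperIntuitionistic L')
    (hfin : SameFinPosets L' L) (hT : IsPrimeTheory L' n T) : HasFiniteReps n T := by
  obtain ⟨ψ, hψL, hψn, hψ⟩ := hL.exists_hasFiniteReps_formula (hlt.hasFiniteReps hL n)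
  suffices ψ ∈ T from hψ L' T hT this
  by_contra hψT
  obtain ⟨T', hT', -, hψT', hmax⟩ :=
    exists_isPrimeTheory_superset hT.usesVarsLt hψn fun hd => hψT (hT.closed ψ hψn hd)
  have hT'fin : HasFiniteReps n T' :=
    hT'.hasFiniteReps_of_ssuperset (hlt.hasFiniteReps hL n) fun T'' hT'' hss =>
      fun _ hχ hχn => hT''.mem_of_sameFinPosets hL' hfin (hψ L' T'' hT'' (hmax T'' hT'' hss)) hχ hχn
  exact hψT' (hT'.mem_of_sameFinPosets hL' hfin hT'fin hψL hψn)

/-- **Theorem.** Every locally tabular si-logic has degree of fmp `1`. -/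
theorem locallyTabular_degFmp_one (L : Set IForm) (hL : SuperIntuitionistic L)
    (hlt : LocallyTabular L) : degFmp L = 1 := by
  have hspan : fmpSpan L = {L} := by
    refine Set.eq_singleton_iff_unique_mem.2 ⟨⟨hL, fun X _ _ => Iff.rfl⟩, ?_⟩
    rintro L' ⟨hL', hfin⟩
    refine subset_antisymm (hfin.subset hL fun n T hT => ?_) (hfin.symm.subset hL' fun n T hT => ?_)
    · exact (hlt.hasFiniteReps hL n).mono fun χ hχ hχn => hT.mem_of_mem_logic hχ hχn
    · exact hlt.hasFiniteReps_of_isPrimeTheory hL hL' hfin.symm hT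
  rw [degFmp, hspan]
  exact Cardinal.mk_singleton L
end

section
/- (1) For all 1 ≤ m ≤ n, the Esakia space 𝔊ₘ is a continuous p-morphic image of 𝔊ₙ, i.e., there exists a surjective continuous p-morphism from 𝔊ₙ onto 𝔊ₘ. (2) For each n ≥ 1, the Esakia space 𝟏 ⊕ 𝔏₄ ⊕ 𝔠ₙ is a continuous p-morphic image of 𝔊ₙ. -/
/-- An ordered topological space: the data underlying an Esakia space. -/
structure OTS : Type 1 where
  carrier : Type
  ord : PartialOrder carrier
  topo : TopologicalSpace carrier

namespace OTS

/-- The order of the sum `X ⊕ Y`: every point of `Y` lies below every point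
of `X`. -/
def sumLE (X Y : OTS) : (X.carrier ⊕ Y.carrier) → (X.carrier ⊕ Y.carrier) → Prop
  | .inl a, .inl b => X.ord.le a b
  | .inr a, .inr b => Y.ord.le a b
  | .inr _, .inl _ => True
  | .inl _, .inr _ => False

/-- `X ⊕ Y`: the sum of ordered topological spaces obtained by placing `Y`
below `X`, with the disjoint-union topology. -/
def oplus (X Y : OTS) : OTS where
  carrier := X.carrier ⊕ Y.carrier
  ord :=
    { le := sumLE X Y
      le_refl := by
        rintro (a | a)
        · exact X.ord.le_refl a
        · exact Y.ord.le_refl a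
      le_trans := by
        rintro (a | a) (b | b) (c | c) h1 h2
        · exact X.ord.le_trans a b c h1 h2
        · exact h2
        · exact (h1 : False).elim
        · exact h1
        · trivial
        · exact (h2 : False).elim
        · trivial
        · exact Y.ord.le_trans a b c h1 h2
      le_antisymm := by
        rintro (a | a) (b | b) h1 h2
        · exact congrArg Sum.inl (X.ord.le_antisymm a b h1 h2)
        · exact (h1 : False).elim
        · exact (h2 : False).elim
        · exact congrArg Sum.inr (Y.ord.le_antisymm a b h1 h2) }
  topo := by
    letI := X.topo; letI := Y.topo
    exact inferInstance

/-- The one-point Esakia space `𝟏`. -/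
def onePoint : OTS where
  carrier := PUnit
  ord :=
    { le := fun _ _ => True
      lt := fun _ _ => True ∧ ¬True
      lt_iff_le_not_ge := fun _ _ => Iff.rfl
      le_refl := fun _ => trivial
      le_trans := fun _ _ _ _ _ => trivial
      le_antisymm := fun a b _ _ => by cases a; cases b; rfl }
  topo := ⊥

/-- The `n`-element chain `𝔠ₙ` with the discrete topology. -/
def chainOTS (n : ℕ) : OTS where
  carrier := Fin n
  ord := inferInstance
  topo := ⊥

/-- The order of the Rieger–Nishimura ladder: the least partial order with
`w_{k+2} ≤ w_k` and `w_{k+3} ≤ w_k` for all `k` and `ω` (encoded by `none`)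
below every point; concretely, `w_j ≤ w_k` iff `j = k` or `j ≥ k + 2`. -/
def ladderLE : Option ℕ → Option ℕ → Prop
  | none, _ => True
  | some _, none => False
  | some j, some k => j = k ∨ k + 2 ≤ j

/-- The Rieger–Nishimura ladder `𝔏`: every `w_k` is isolated and the open sets
containing `ω` are exactly the cofinite ones. -/
def ladder : OTS where
  carrier := Option ℕ
  ord :=
    { le := ladderLE
      lt := fun a b => ladderLE a b ∧ ¬ladderLE b a
      lt_iff_le_not_ge := fun _ _ => Iff.rfl
      le_refl := by
        rintro (_ | j)
        · trivial
        · exact Or.inl rfl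
      le_trans := by
        rintro (_ | a) (_ | b) (_ | c) h1 h2
        · trivial
        · trivial
        · trivial
        · trivial
        · exact (h1 : False).elim
        · exact (h1 : False).elim
        · exact (h2 : False).elim
        · have h1' : a = b ∨ b + 2 ≤ a := h1
          have h2' : b = c ∨ c + 2 ≤ b := h2
          show a = c ∨ c + 2 ≤ a
          omega
      le_antisymm := by
        rintro (_ | a) (_ | b) h1 h2
        · rfl
        · exact (h2 : False).elim
        · exact (h1 : False).elim
        · have h1' : a = b ∨ b + 2 ≤ a := h1
          have h2' : b = a ∨ a + 2 ≤ b := h2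
          have hab : a = b := by omega
          rw [hab] }
  topo :=
    { IsOpen := fun U => none ∈ U → Uᶜ.Finite
      isOpen_univ := by intro _; simp
      isOpen_inter := by
        intro s t hs ht hmem
        rw [Set.compl_inter]
        exact (hs hmem.1).union (ht hmem.2)
      isOpen_sUnion := by
        intro S hS hmem
        obtain ⟨U, hU, hUm⟩ := hmem
        exact (hS U hU hUm).subset
          (Set.compl_subset_compl.mpr (Set.subset_sUnion_of_mem hU)) }

/-- `𝔏₄`: the four-element upset `↑w₄ = {w₄, w₂, w₁, w₀}` of the
Rieger–Nishimura ladder, with the discrete topology. -/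
def ladder4 : OTS where
  carrier := {k : ℕ // k = 4 ∨ k = 2 ∨ k = 1 ∨ k = 0}
  ord :=
    { le := fun a b => a.1 = b.1 ∨ b.1 + 2 ≤ a.1
      lt := fun a b => (a.1 = b.1 ∨ b.1 + 2 ≤ a.1) ∧ ¬(b.1 = a.1 ∨ a.1 + 2 ≤ b.1)
      lt_iff_le_not_ge := fun _ _ => Iff.rfl
      le_refl := fun _ => Or.inl rfl
      le_trans := by
        rintro ⟨a, _⟩ ⟨b, _⟩ ⟨c, _⟩ h1 h2
        have h1' : a = b ∨ b + 2 ≤ a := h1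
        have h2' : b = c ∨ c + 2 ≤ b := h2
        show a = c ∨ c + 2 ≤ a
        omega
      le_antisymm := by
        rintro ⟨a, _⟩ ⟨b, _⟩ h1 h2
        have h1' : a = b ∨ b + 2 ≤ a := h1
        have h2' : b = a ∨ a + 2 ≤ b := h2
        have hab : a = b := by omega
        exact Subtype.ext hab }
  topo := ⊥

/-- `𝔊ₙ = 𝟏 ⊕ 𝔏 ⊕ 𝔏₄ ⊕ 𝔠ₙ`. -/
def G (n : ℕ) : OTS := onePoint.oplus (ladder.oplus (ladder4.oplus (chainOTS n)))

/-- The downset `↓S` generated by a subset. -/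
def dset (X : OTS) (S : Set X.carrier) : Set X.carrier :=
  {x | ∃ y ∈ S, X.ord.le x y}

/-- Interpretation of a formula as a subset of the space, via the Heyting
operations on (clopen) upsets: `∩`, `∪`, `U → V = X ∖ ↓(U ∖ V)`, `∅`. -/
def seval (X : OTS) (v : ℕ → Set X.carrier) : IForm → Set X.carrier
  | .var n => v n
  | .bot => ∅
  | .and φ ψ => seval X v φ ∩ seval X v ψ
  | .or φ ψ => seval X v φ ∪ seval X v ψ
  | .imp φ ψ => (dset X (seval X v φ \ seval X v ψ))ᶜ

/-- Clopen upsets of the space. -/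
def IsClopenUpset (X : OTS) (U : Set X.carrier) : Prop :=
  (@IsClopen X.carrier X.topo U) ∧ ∀ a b, X.ord.le a b → a ∈ U → b ∈ U

/-- The logic of an (Esakia) space: the formulas which every assignment of
clopen upsets to the variables sends to the top element `X` of the Heyting
algebra `X*` of clopen upsets. -/
def esLog (X : OTS) : Set IForm :=
  {φ | ∀ v : ℕ → Set X.carrier, (∀ n, IsClopenUpset X (v n)) →
    seval X v φ = Set.univ}

/-- A p-morphism: `α(↑x) = ↑α(x)` for every `x`. -/
def IsPMorphism (X Y : OTS) (f : X.carrier → Y.carrier) : Prop :=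
  ∀ x : X.carrier, f '' {z | X.ord.le x z} = {w | Y.ord.le (f x) w}

/-- Continuity with respect to the topologies of the two spaces. -/
def IsContMap (X Y : OTS) (f : X.carrier → Y.carrier) : Prop :=
  @Continuous X.carrier Y.carrier X.topo Y.topo f

end OTS

/-! Surjective continuous p-morphisms compose and are stable under `⊕`, provided the map on the
upper summand is onto (the upset of a point of the lower summand contains the whole upper one).
Part (1) is `id ⊕ id ⊕ id ⊕ c`, where `c : 𝔠ₙ → 𝔠ₘ`, `i ↦ min i (m - 1)`, is a monotone
surjection out of a chain. For part (2), reassociate `𝔊ₙ` as `(𝟏 ⊕ 𝔏) ⊕ (𝔏₄ ⊕ 𝔠ₙ)` and collapse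
the top summand `𝟏 ⊕ 𝔏` to a point. -/

theorem Monotone.image_Ici_of_surjective {α β : Type*} [LinearOrder α] [PartialOrder β]
    {f : α → β} (hf : Monotone f) (hs : Function.Surjective f) (x : α) :
    f '' Set.Ici x = Set.Ici (f x) := by
  refine Set.Subset.antisymm hf.image_Ici_subset fun w hw => ?_
  obtain ⟨z, rfl⟩ := hs w
  rcases le_total x z with hxz | hzx
  · exact ⟨z, hxz, rfl⟩
  · exact ⟨x, le_rfl, le_antisymm hw (hf hzx)⟩

namespace OTS

theorem isPMorphism_iff {X Y : OTS} {f : X.carrier → Y.carrier} :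
    IsPMorphism X Y f ↔ (∀ x z, X.ord.le x z → Y.ord.le (f x) (f z)) ∧
      ∀ x w, Y.ord.le (f x) w → ∃ z, X.ord.le x z ∧ f z = w := by
  refine ⟨fun h => ⟨fun x z hxz => ?_, fun x w hw => ?_⟩, fun ⟨hmono, hback⟩ x => ?_⟩
  · exact (h x).subset ⟨z, hxz, rfl⟩
  · exact (h x).symm.subset hw
  · ext w
    exact ⟨fun ⟨z, hxz, hz⟩ => hz ▸ hmono x z hxz, hback x w⟩

theorem IsPMorphism.id (X : OTS) : IsPMorphism X X id := fun _ => Set.image_id _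

theorem IsPMorphism.comp {X Y Z : OTS} {g : Y.carrier → Z.carrier} {f : X.carrier → Y.carrier}
    (hg : IsPMorphism Y Z g) (hf : IsPMorphism X Y f) : IsPMorphism X Z (g ∘ f) := by
  intro x
  rw [Set.image_comp, hf x, hg (f x)]
  rfl

theorem IsPMorphism.sumMap {X Y X' Y' : OTS} {f : X.carrier → X'.carrier}
    {g : Y.carrier → Y'.carrier} (hf : IsPMorphism X X' f) (hfs : Function.Surjective f)
    (hg : IsPMorphism Y Y' g) : IsPMorphism (X.oplus Y) (X'.oplus Y') (Sum.map f g) := by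
  rw [isPMorphism_iff] at hf hg
  refine isPMorphism_iff.mpr ⟨?_, ?_⟩
  · rintro (a | b) (a' | b') h
    exacts [hf.1 a a' h, h, h, hg.1 b b' h]
  · rintro (a | b) (w | w) h
    · obtain ⟨z, hz, rfl⟩ := hf.2 a w h
      exact ⟨.inl z, hz, rfl⟩
    · exact (h : False).elim
    · obtain ⟨z, rfl⟩ := hfs w
      exact ⟨.inl z, trivial, rfl⟩
    · obtain ⟨z, hz, rfl⟩ := hg.2 b w h
      exact ⟨.inr z, hz, rfl⟩

theorem IsPMorphism.collapseTop {X Y : OTS} (hX : Nonempty X.carrier) :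
    IsPMorphism (X.oplus Y) (onePoint.oplus Y)
      (Sum.elim (fun _ => .inl PUnit.unit) Sum.inr) := by
  refine isPMorphism_iff.mpr ⟨?_, ?_⟩
  · rintro (a | b) (a' | b') h
    exacts [trivial, h, trivial, h]
  · rintro (a | b) (⟨⟩ | w) h
    · exact ⟨.inl a, X.ord.le_refl a, rfl⟩
    · exact (h : False).elim
    · exact ⟨.inl hX.some, trivial, rfl⟩
    · exact ⟨.inr w, h, rfl⟩

theorem IsPMorphism.oplusAssoc (X Y Z : OTS) :
    IsPMorphism (X.oplus (Y.oplus Z)) ((X.oplus Y).oplus Z) (Equiv.sumAssoc _ _ _).symm := by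
  refine isPMorphism_iff.mpr ⟨?_, ?_⟩
  · rintro (a | b | c) (a' | b' | c') h <;> exact h
  · rintro (a | b | c) ((w | w) | w) h
    all_goals first
      | exact (h : False).elim
      | exact ⟨.inl w, h, rfl⟩
      | exact ⟨.inr (.inl w), h, rfl⟩
      | exact ⟨.inr (.inr w), h, rfl⟩

theorem IsContMap.id (X : OTS) : IsContMap X X id :=
  @continuous_id _ X.topo

theorem IsContMap.comp {X Y Z : OTS} {g : Y.carrier → Z.carrier} {f : X.carrier → Y.carrier}
    (hg : IsContMap Y Z g) (hf : IsContMap X Y f) : IsContMap X Z (g ∘ f) :=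
  @Continuous.comp _ _ _ X.topo Y.topo Z.topo _ _ hg hf

theorem IsContMap.sumMap {X Y X' Y' : OTS} {f : X.carrier → X'.carrier}
    {g : Y.carrier → Y'.carrier} (hf : IsContMap X X' f) (hg : IsContMap Y Y' g) :
    IsContMap (X.oplus Y) (X'.oplus Y') (Sum.map f g) :=
  letI := X.topo; letI := Y.topo; letI := X'.topo; letI := Y'.topo
  Continuous.sumMap hf hg

theorem IsContMap.collapseTop (X Y : OTS) :
    IsContMap (X.oplus Y) (onePoint.oplus Y) (Sum.elim (fun _ => .inl PUnit.unit) Sum.inr) := by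
  let := X.topo; let := Y.topo; let := onePoint.topo
  let : TopologicalSpace (onePoint.oplus Y).carrier := (onePoint.oplus Y).topo
  exact continuous_const.sumElim continuous_inr

theorem IsContMap.oplusAssoc (X Y Z : OTS) :
    IsContMap (X.oplus (Y.oplus Z)) ((X.oplus Y).oplus Z) (Equiv.sumAssoc _ _ _).symm := by
  let := X.topo; let := Y.topo; let := Z.topo
  exact Homeomorph.continuous_sumAssoc_symm _ _ _

theorem IsContMap.of_topo_eq_bot {X Y : OTS} (h : X.topo = ⊥) (f : X.carrier → Y.carrier) :
    IsContMap X Y f := by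
  let := Y.topo
  unfold IsContMap
  rw [h]
  exact continuous_bot

def HasPMorphicImage (X Y : OTS) : Prop :=
  ∃ f : X.carrier → Y.carrier, Function.Surjective f ∧ IsContMap X Y f ∧ IsPMorphism X Y f

namespace HasPMorphicImage

theorem refl (X : OTS) : HasPMorphicImage X X :=
  ⟨id, Function.surjective_id, IsContMap.id X, IsPMorphism.id X⟩

theorem trans {X Y Z : OTS} (hXY : HasPMorphicImage X Y) (hYZ : HasPMorphicImage Y Z) :
    HasPMorphicImage X Z := by
  obtain ⟨f, hfs, hfc, hfp⟩ := hXY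
  obtain ⟨g, hgs, hgc, hgp⟩ := hYZ
  exact ⟨g ∘ f, hgs.comp hfs, hgc.comp hfc, hgp.comp hfp⟩

theorem oplus {X Y X' Y' : OTS} (hX : HasPMorphicImage X X') (hY : HasPMorphicImage Y Y') :
    HasPMorphicImage (X.oplus Y) (X'.oplus Y') := by
  obtain ⟨f, hfs, hfc, hfp⟩ := hX
  obtain ⟨g, hgs, hgc, hgp⟩ := hY
  exact ⟨Sum.map f g, hfs.sumMap hgs, hfc.sumMap hgc, hfp.sumMap hfs hgp⟩

theorem oplus_right (X : OTS) {Y Y' : OTS} (hY : HasPMorphicImage Y Y') :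
    HasPMorphicImage (X.oplus Y) (X.oplus Y') :=
  (refl X).oplus hY

theorem collapseTop {X : OTS} (Y : OTS) (hX : Nonempty X.carrier) :
    HasPMorphicImage (X.oplus Y) (onePoint.oplus Y) := by
  refine ⟨_, ?_, IsContMap.collapseTop X Y, IsPMorphism.collapseTop hX⟩
  rintro (⟨⟩ | y)
  · exact ⟨.inl hX.some, rfl⟩
  · exact ⟨.inr y, rfl⟩

theorem oplusAssoc (X Y Z : OTS) :
    HasPMorphicImage (X.oplus (Y.oplus Z)) ((X.oplus Y).oplus Z) :=
  ⟨_, (Equiv.sumAssoc _ _ _).symm.surjective, IsContMap.oplusAssoc X Y Z,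
    IsPMorphism.oplusAssoc X Y Z⟩

theorem chainOTS_of_le {m n : ℕ} (hm : 1 ≤ m) (hmn : m ≤ n) :
    HasPMorphicImage (chainOTS n) (chainOTS m) := by
  let f : Fin n → Fin m := fun i => ⟨min i (m - 1), by omega⟩
  have hmono : Monotone f := fun i j hij => Fin.mk_le_mk.mpr (min_le_min_right _ hij)
  have hsurj : Function.Surjective f := fun j => ⟨⟨j, by omega⟩, Fin.ext (by simp [f]; omega)⟩
  exact ⟨f, hsurj, IsContMap.of_topo_eq_bot (X := chainOTS n) (Y := chainOTS m) rfl f,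
    hmono.image_Ici_of_surjective hsurj⟩

end HasPMorphicImage

end OTS

open OTS in
/-- **Lemma.** (1) For all `1 ≤ m ≤ n`, `𝔊ₘ` is a continuous p-morphic image
of `𝔊ₙ`. (2) For each `n ≥ 1`, `𝟏 ⊕ 𝔏₄ ⊕ 𝔠ₙ` is a continuous p-morphic image
of `𝔊ₙ`. -/
theorem G_pmorphic_images :
    (∀ m n : ℕ, 1 ≤ m → m ≤ n →
        ∃ f : (G n).carrier → (G m).carrier,
          Function.Surjective f ∧ IsContMap (G n) (G m) f ∧
            IsPMorphism (G n) (G m) f) ∧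
    (∀ n : ℕ, 1 ≤ n →
        ∃ f : (G n).carrier → (onePoint.oplus (ladder4.oplus (chainOTS n))).carrier,
          Function.Surjective f ∧
            IsContMap (G n) (onePoint.oplus (ladder4.oplus (chainOTS n))) f ∧
            IsPMorphism (G n) (onePoint.oplus (ladder4.oplus (chainOTS n))) f) := by
  refine ⟨fun m n hm hmn => ?_, fun n _ => ?_⟩
  · exact HasPMorphicImage.oplus_right _ <| .oplus_right _ <| .oplus_right _ <|
      .chainOTS_of_le hm hmn
  · exact (HasPMorphicImage.oplusAssoc _ _ _).trans (.collapseTop _ ⟨.inl PUnit.unit⟩)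
end
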